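/- arXiv:2307.14468 — 2 statements merged into one kernel-verified Lean document; each statement's English description precedes it below -/
import Mathlib

section
/- Fix k ∈ ℕ with k ≥ 3, and let K(H_o^k) be the class of finite ordered (k+1)-uniform hypergraphs satisfying condition (†). Then every structure in K(H_o^k) with at most k−1 vertices is a Ramsey object: for every such A = (V_A, S_A, ≤_A), every B in K(H_o^k) and every n ∈ ℕ, there is C in K(H_o^k) such that for every colouring χ : Emb(A, C) → Fin n there is an embedding g ∈ Emb(B, C) with the map f ↦ χ(g ∘ f) constant on Emb(A, B). -/
/-- A finite linearly ordered `m`-uniform hypergraph. -/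
structure OrdHyp (m : ℕ) where
  V : Type
  fin : Fintype V
  ord : LinearOrder V
  S : Set (Finset V)
  uniform : ∀ e ∈ S, e.card = m

attribute [instance] OrdHyp.fin OrdHyp.ord

/-- Condition (†) for a `(k+1)`-uniform hypergraph: every `(k+2)`-element set of vertices
spans a number of hyperedges congruent to `k` modulo `2`. -/
def Dagger (k : ℕ) {V : Type} (S : Set (Finset V)) : Prop :=
  ∀ W : Finset V, W.card = k + 2 →
    {A : Finset V | A ⊆ W ∧ A.card = k + 1 ∧ A ∈ S}.ncard % 2 = k % 2

/-- An embedding of ordered hypergraphs: an order-preserving injection preserving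
membership of edge-sized subsets in the hyperedge relation in both directions. -/
def IsEmb {m : ℕ} (H₁ H₂ : OrdHyp m) (f : H₁.V → H₂.V) : Prop :=
  StrictMono f ∧ ∀ e : Finset H₁.V, e.card = m → (e ∈ H₁.S ↔ e.image f ∈ H₂.S)

/-- The set of embeddings of `H₁` into `H₂`. -/
def Emb {m : ℕ} (H₁ H₂ : OrdHyp m) : Type :=
  {f : H₁.V → H₂.V // IsEmb H₁ H₂ f}

/-- Composition of embeddings of ordered hypergraphs. -/
def Emb.comp {m : ℕ} {H₁ H₂ H₃ : OrdHyp m} (g : Emb H₂ H₃) (f : Emb H₁ H₂) :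
    Emb H₁ H₃ :=
  ⟨g.1 ∘ f.1, g.2.1.comp f.2.1, fun e he => by
    rw [← Finset.image_image]
    exact (f.2.2 e he).trans (g.2.2 (e.image f.1)
      (by rw [Finset.card_image_of_injective _ f.2.1.injective]; exact he))⟩

/-- `A` is a Ramsey object for the class `Cls` of ordered hypergraphs. -/
def RamseyObject {m : ℕ} (Cls : Set (OrdHyp m)) (A : OrdHyp m) : Prop :=
  ∀ B ∈ Cls, ∀ n : ℕ, ∃ C ∈ Cls, ∀ χ : Emb A C → Fin n,
    ∃ g : Emb B C, ∀ f f' : Emb A B, χ (g.comp f) = χ (g.comp f')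

namespace KCSR

/-! ### Arithmetic helpers -/

lemma enc_div {r m : ℕ} (p : ℕ) (h : r < m) : (p * m + r) / m = p := by
  rw [mul_comm, Nat.mul_add_div (by omega), Nat.div_eq_of_lt h, add_zero]

lemma enc_mod {r m : ℕ} (p : ℕ) (h : r < m) : (p * m + r) % m = r := by
  rw [mul_comm, Nat.mul_add_mod, Nat.mod_eq_of_lt h]

/-! ### Grid Ramsey -/

theorem gridRamsey (a : ℕ) : ∀ (X : Fin a → Type) [∀ i, Fintype (X i)]
    (κ : Type) [Fintype κ],
    ∃ U₀ : ℕ, ∀ U, U₀ ≤ U → ∀ χ : (Fin a → Fin U) → κ,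
      ∃ (ι : ∀ i, X i ↪ Fin U) (c : κ), ∀ x : ∀ i, X i,
        χ (fun i => ι i (x i)) = c := by
  induction a with
  | zero =>
    intro X _ κ _
    refine ⟨1, fun U hU χ => ⟨fun i => i.elim0, χ (fun i => i.elim0), fun x => ?_⟩⟩
    congr 1
    funext i; exact i.elim0
  | succ a ih =>
    intro X _ κ _
    set u0 : ℕ := Fintype.card κ * Fintype.card (X 0) + 1 with hu0
    obtain ⟨U₀', hIH⟩ := ih (fun i => X i.succ) (Fin u0 → κ)
    refine ⟨max U₀' u0, fun U hU χ => ?_⟩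
    have hU' : U₀' ≤ U := le_trans (le_max_left _ _) hU
    have hu0U : u0 ≤ U := le_trans (le_max_right _ _) hU
    -- color functions on the tail by functions from Fin u0
    set χ' : (Fin a → Fin U) → (Fin u0 → κ) :=
      fun y t => χ (Fin.cons (Fin.castLE hu0U t) y) with hχ'
    obtain ⟨ι', c', hc'⟩ := hIH U hU' χ'
    -- pigeonhole on c' : Fin u0 → κ
    have hκ : Nonempty κ := ⟨c' ⟨0, by omega⟩⟩
    classical
    obtain ⟨y, hy⟩ := Fintype.exists_le_card_fiber_of_mul_le_card (f := c')
      (n := Fintype.card (X 0)) (by simp [hu0])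
    -- embedding of X 0 into the fiber
    have hcard : Fintype.card (X 0) ≤ Fintype.card {t : Fin u0 // c' t = y} := by
      rw [Fintype.card_subtype]
      exact hy
    obtain ⟨e0⟩ := Function.Embedding.nonempty_of_card_le hcard
    set e0' : X 0 ↪ Fin U :=
      e0.trans ((Function.Embedding.subtype _).trans (Fin.castLEEmb hu0U))
      with he0'
    refine ⟨Fin.cases e0' ι', y, fun x => ?_⟩
    have hfun : (fun i => (Fin.cases e0' ι' i : X i ↪ Fin U) (x i))
        = Fin.cons (α := fun _ => Fin U) (e0' (x 0)) (fun i => ι' i (x i.succ)) := by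
      funext i
      induction i using Fin.cases with
      | zero => simp
      | succ j => simp
    rw [hfun]
    have h1 : e0' (x 0) = Fin.castLE hu0U (e0 (x 0)).1 := by
      simp [he0', Fin.castLEEmb]
    rw [h1]
    have h2 := hc' (fun i => x i.succ)
    have h3 : χ' (fun i => ι' i (x i.succ)) ((e0 (x 0)).1) = c' ((e0 (x 0)).1) := by
      rw [h2]
    rw [hχ'] at h3
    simpa [(e0 (x 0)).2] using h3
  


/-- Pre-homogeneous chain lemma: inner step for Ramsey's theorem. -/
theorem finRamsey (a : ℕ) : ∀ n m : ℕ, ∃ Nr : ℕ, ∀ V : Finset ℕ, Nr ≤ V.card →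
    ∀ χ : Finset ℕ → Fin n, ∃ (H : Finset ℕ) (c : Fin n), H ⊆ V ∧ H.card = m ∧
      ∀ s ⊆ H, s.card = a → χ s = c := by
  induction a with
  | zero =>
    intro n m
    refine ⟨m, fun V hV χ => ?_⟩
    obtain ⟨H, hHV, hHm⟩ := Finset.exists_subset_card_eq hV
    refine ⟨H, χ ∅, hHV, hHm, fun s hs hcard => ?_⟩
    rw [Finset.card_eq_zero.mp hcard]
  | succ a ih =>
    -- pre-homogeneous chains
    have pre : ∀ n t : ℕ, ∃ Nr : ℕ, ∀ V : Finset ℕ, Nr ≤ V.card →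
        ∀ χ : Finset ℕ → Fin n, ∃ (H : Finset ℕ) (γ : ℕ → Fin n), H ⊆ V ∧ H.card = t ∧
          ∀ s, s ⊆ H → ∀ hc : s.card = a + 1,
            χ s = γ (s.min' (Finset.card_pos.mp (by omega))) := by
      intro n t
      induction t with
      | zero =>
        exact ⟨0, fun V _ χ => ⟨∅, fun _ => χ ∅, Finset.empty_subset V, rfl,
          fun s hs hc => by
            simp only [Finset.subset_empty] at hs
            exact absurd hc (by simp [hs])⟩⟩
      | succ t iht =>
        obtain ⟨N1, h1⟩ := iht
        obtain ⟨N2, h2⟩ := ih n N1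
        refine ⟨N2 + 1, fun V hV χ => ?_⟩
        have hVne : V.Nonempty := Finset.card_pos.mp (by omega)
        set v₀ := V.min' hVne with hv₀
        have hv₀V : v₀ ∈ V := V.min'_mem hVne
        set V' := V.erase v₀ with hV'
        have hV'card : N2 ≤ V'.card := by
          rw [hV', Finset.card_erase_of_mem hv₀V]; omega
        obtain ⟨H₁, c₀, hH₁V', hH₁card, hH₁⟩ := h2 V' hV'card (fun s => χ (insert v₀ s))
        obtain ⟨H₂, γ₂, hH₂H₁, hH₂card, hH₂⟩ := h1 H₁ (le_of_eq hH₁card.symm) χ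
        have hv₀H₂ : v₀ ∉ H₂ := fun h =>
          Finset.ne_of_mem_erase (hH₁V' (hH₂H₁ h)) rfl
        refine ⟨insert v₀ H₂, Function.update γ₂ v₀ c₀, ?_, ?_, ?_⟩
        · intro x hx
          rcases Finset.mem_insert.mp hx with h | h
          · exact h ▸ hv₀V
          · exact Finset.mem_of_mem_erase (hH₁V' (hH₂H₁ h))
        · rw [Finset.card_insert_of_notMem hv₀H₂, hH₂card]
        · intro s hs hc
          by_cases hv₀s : v₀ ∈ s
          · have hmin : s.min' (Finset.card_pos.mp (by omega)) = v₀ := by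
              refine le_antisymm (Finset.min'_le s v₀ hv₀s) (Finset.le_min' _ _ _ ?_)
              intro y hy
              have : y ∈ V := by
                rcases Finset.mem_insert.mp (hs hy) with h | h
                · exact h ▸ hv₀V
                · exact Finset.mem_of_mem_erase (hH₁V' (hH₂H₁ h))
              exact V.min'_le y this
            rw [hmin, Function.update_self]
            have hse : s.erase v₀ ⊆ H₂ := by
              intro y hy
              have hyH := hs (Finset.mem_of_mem_erase hy)
              rcases Finset.mem_insert.mp hyH with h | h
              · exact absurd h (Finset.ne_of_mem_erase hy)
              · exact h
            have := hH₁ (s.erase v₀) (hse.trans hH₂H₁)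
              (by rw [Finset.card_erase_of_mem hv₀s, hc]; rfl)
            rw [Finset.insert_erase hv₀s] at this
            exact this
          · have hsH₂ : s ⊆ H₂ := by
              intro y hy
              rcases Finset.mem_insert.mp (hs hy) with h | h
              · exact absurd (h ▸ hy) hv₀s
              · exact h
            rw [hH₂ s hsH₂ hc]
            have hmem : s.min' (Finset.card_pos.mp (by omega)) ∈ s := Finset.min'_mem _ _
            rw [Function.update_of_ne (fun h : s.min' _ = v₀ => hv₀s (h ▸ hmem)) _ _]
    intro n m
    obtain ⟨Nr, hNr⟩ := pre n (n * m)
    refine ⟨Nr, fun V hV χ => ?_⟩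
    obtain ⟨H, γ, hHV, hHcard, hH⟩ := hNr V hV χ
    have hκ : (Finset.univ : Finset (Fin n)).Nonempty := ⟨χ ∅, Finset.mem_univ _⟩
    obtain ⟨c, _, hc⟩ := Finset.exists_le_card_fiber_of_mul_le_card_of_maps_to
      (f := γ) (s := H) (t := Finset.univ) (fun x _ => Finset.mem_univ _) hκ
      (by rw [hHcard, Finset.card_univ, Fintype.card_fin])
    obtain ⟨H', hH'f, hH'card⟩ := Finset.exists_subset_card_eq hc
    refine ⟨H', c, (hH'f.trans (Finset.filter_subset _ _)).trans hHV, hH'card, ?_⟩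
    intro s hs hcard
    have hsH : s ⊆ H := hs.trans (hH'f.trans (Finset.filter_subset _ _))
    rw [hH s hsH hcard]
    have hmin : s.min' (Finset.card_pos.mp (by omega)) ∈ H.filter (fun x => γ x = c) :=
      hH'f (hs (Finset.min'_mem _ _))
    exact (Finset.mem_filter.mp hmin).2



/-- Number of `k`-element subsets of `e` lying in `G`. -/
noncomputable def cnt (k : ℕ) {V : Type} (G : Set (Finset V)) (e : Finset V) : ℕ :=
  {f : Finset V | f ⊆ e ∧ f.card = k ∧ f ∈ G}.ncard

lemma cnt_eq_card {V : Type} (k : ℕ) (G : Set (Finset V)) (e : Finset V)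
    [DecidablePred (· ∈ G)] :
    cnt k G e = ((e.powersetCard k).filter (fun f => f ∈ G)).card := by
  rw [cnt, ← Set.ncard_coe_finset]
  congr 1
  ext f
  simp only [Finset.coe_filter, Finset.mem_powersetCard, Set.mem_setOf_eq]
  tauto

open Classical

lemma setcard {V : Type} (S : Set (Finset V)) (W : Finset V) (m : ℕ) :
    {A : Finset V | A ⊆ W ∧ A.card = m ∧ A ∈ S}.ncard =
      ((W.powersetCard m).filter (fun A => A ∈ S)).card := by
  rw [← Set.ncard_coe_finset]
  congr 1
  ext A
  simp [Finset.mem_powersetCard, and_assoc]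

/-- Counting `m`-subsets of an `(m+1)`-set `W` satisfying `P` by their missing element. -/
lemma count_erase {V : Type} (W : Finset V) (m : ℕ) (hW : W.card = m + 1)
    (P : Finset V → Prop) [DecidablePred P] :
    ((W.powersetCard m).filter (fun A => P A)).card
      = (W.filter (fun y => P (W.erase y))).card := by
  refine (Finset.card_bij (fun y _ => W.erase y) ?_ ?_ ?_).symm
  · intro y hy
    have hyW : y ∈ W := (Finset.mem_filter.mp hy).1
    refine Finset.mem_filter.mpr ⟨Finset.mem_powersetCard.mpr
      ⟨Finset.erase_subset _ _, by rw [Finset.card_erase_of_mem hyW, hW]; omega⟩,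
      (Finset.mem_filter.mp hy).2⟩
  · intro y hy y' hy' h
    exact Finset.erase_injOn W (Finset.mem_coe.mpr (Finset.mem_filter.mp hy).1)
      (Finset.mem_coe.mpr (Finset.mem_filter.mp hy').1) h
  · intro A hA
    obtain ⟨hA1, hA2⟩ := Finset.mem_filter.mp hA
    obtain ⟨hAW, hAcard⟩ := Finset.mem_powersetCard.mp hA1
    have hne : (W \ A).Nonempty := by
      rw [← Finset.card_pos, Finset.card_sdiff_of_subset hAW, hW, hAcard]; omega
    obtain ⟨y, hy⟩ := hne
    have hyW : y ∈ W := (Finset.mem_sdiff.mp hy).1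
    have hyA : y ∉ A := (Finset.mem_sdiff.mp hy).2
    have hAe : W.erase y = A := by
      refine (Finset.eq_of_subset_of_card_le ?_ ?_).symm
      · exact Finset.subset_erase.mpr ⟨hAW, hyA⟩
      · rw [Finset.card_erase_of_mem hyW, hW, hAcard]; omega
    exact ⟨y, Finset.mem_filter.mpr ⟨hyW, hAe ▸ hA2⟩, hAe⟩

lemma cast_mod2 (x : ℕ) : (x : ZMod 2) = ((x % 2 : ℕ) : ZMod 2) :=
  (ZMod.natCast_mod x 2).symm

lemma mod2_of_cast {x y : ℕ} (h : (x : ZMod 2) = (y : ZMod 2)) : x % 2 = y % 2 :=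
  (ZMod.natCast_eq_natCast_iff x y 2).mp h

lemma ind_eq (x k : ℕ) :
    (if x % 2 = (k + 1) % 2 then (1 : ZMod 2) else 0) = (x : ZMod 2) + (k : ZMod 2) := by
  rcases Nat.mod_two_eq_zero_or_one x with hx | hx <;>
    rcases Nat.mod_two_eq_zero_or_one k with hk | hk <;>
      rw [cast_mod2 x, cast_mod2 k, hx, hk] <;>
        [rw [show (k+1) % 2 = 1 from by omega]; rw [show (k+1) % 2 = 0 from by omega];
         rw [show (k+1) % 2 = 1 from by omega]; rw [show (k+1) % 2 = 0 from by omega]] <;>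
        [skip; skip; skip; skip] <;> norm_num <;> decide

/-- The parity hypergraph generated by `G` satisfies condition (†). -/
theorem dagger_gen {V : Type} (k : ℕ) (G : Set (Finset V)) :
    Dagger k {e : Finset V | e.card = k + 1 ∧ cnt k G e % 2 = (k + 1) % 2} := by
  intro W hW
  have hset : {A : Finset V | A ⊆ W ∧ A.card = k + 1 ∧
      A ∈ {e : Finset V | e.card = k + 1 ∧ cnt k G e % 2 = (k + 1) % 2}}.ncard
      = ((W.powersetCard (k+1)).filter
          (fun A => cnt k G A % 2 = (k + 1) % 2)).card := by
    rw [← Set.ncard_coe_finset]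
    congr 1
    ext A
    simp only [Finset.coe_filter, Finset.mem_powersetCard, Set.mem_setOf_eq]
    constructor
    · rintro ⟨h1, h2, h3, h4⟩; exact ⟨⟨h1, h2⟩, h4⟩
    · rintro ⟨⟨h1, h2⟩, h4⟩; exact ⟨h1, h2, h2, h4⟩
  rw [hset]
  have hcnt_eq : ∀ A ∈ W.powersetCard (k+1), cnt k G A
      = ∑ f ∈ W.powersetCard k, (if f ⊆ A ∧ f ∈ G then 1 else 0) := by
    intro A hA
    obtain ⟨hAW, _⟩ := Finset.mem_powersetCard.mp hA
    rw [cnt_eq_card, Finset.card_filter]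
    have hpow : A.powersetCard k = (W.powersetCard k).filter (fun f => f ⊆ A) := by
      ext f
      simp only [Finset.mem_powersetCard, Finset.mem_filter]
      exact ⟨fun ⟨h1, h2⟩ => ⟨⟨h1.trans hAW, h2⟩, h1⟩, fun ⟨⟨h1, h2⟩, h3⟩ => ⟨h3, h2⟩⟩
    rw [hpow, Finset.sum_filter]
    exact Finset.sum_congr rfl (fun f _ => by rw [ite_and])
  have hsum : (∑ A ∈ W.powersetCard (k+1), cnt k G A) % 2 = 0 := by
    have hswap : ∑ A ∈ W.powersetCard (k+1), cnt k G A
        = ∑ f ∈ (W.powersetCard k).filter (fun f => f ∈ G),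
            ((W.powersetCard (k+1)).filter (fun A => f ⊆ A)).card := by
      rw [Finset.sum_congr rfl hcnt_eq, Finset.sum_comm]
      rw [Finset.sum_filter]
      apply Finset.sum_congr rfl
      intro f _
      rw [Finset.card_filter]
      by_cases hf : f ∈ G
      · simp [hf]
      · simp [hf]
    rw [hswap]
    have h2 : ∀ f ∈ (W.powersetCard k).filter (fun f => f ∈ G),
        ((W.powersetCard (k+1)).filter (fun A => f ⊆ A)).card = 2 := by
      intro f hf
      obtain ⟨hfW, hfcard⟩ := Finset.mem_powersetCard.mp (Finset.mem_filter.mp hf).1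
      have hce := count_erase W (k+1) (by omega) (fun A => f ⊆ A)
      rw [hce]
      have hfil : W.filter (fun y => f ⊆ W.erase y) = W \ f := by
        ext y
        simp only [Finset.mem_filter, Finset.mem_sdiff]
        constructor
        · rintro ⟨hyW, hsub⟩
          exact ⟨hyW, fun hyf => (Finset.notMem_erase y W) (hsub hyf)⟩
        · rintro ⟨hyW, hyf⟩
          exact ⟨hyW, Finset.subset_erase.mpr ⟨hfW, hyf⟩⟩
      rw [hfil, Finset.card_sdiff_of_subset hfW, hW, hfcard]
      omega
    rw [Finset.sum_congr rfl h2, Finset.sum_const, smul_eq_mul]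
    omega
  have hcard : (W.powersetCard (k+1)).card = k + 2 := by
    rw [Finset.card_powersetCard, hW]
    exact Nat.choose_succ_self_right (k + 1)
  have key : ((((W.powersetCard (k+1)).filter
      (fun A => cnt k G A % 2 = (k + 1) % 2)).card : ℕ) : ZMod 2) = ((k : ℕ) : ZMod 2) := by
    rw [Finset.card_filter, Nat.cast_sum]
    have t2 : ∀ A ∈ W.powersetCard (k+1),
        (((if cnt k G A % 2 = (k+1) % 2 then (1:ℕ) else 0) : ℕ) : ZMod 2)
          = ((cnt k G A : ℕ) : ZMod 2) + ((k : ℕ) : ZMod 2) := by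
      intro A _
      rw [apply_ite (fun x : ℕ => (x : ZMod 2))]
      rw [Nat.cast_one, Nat.cast_zero]
      exact ind_eq (cnt k G A) k
    rw [Finset.sum_congr rfl t2, Finset.sum_add_distrib]
    have e1 : (∑ A ∈ W.powersetCard (k+1), ((cnt k G A : ℕ) : ZMod 2)) = 0 := by
      rw [← Nat.cast_sum, cast_mod2, hsum, Nat.cast_zero]
    rw [e1, Finset.sum_const, hcard, zero_add]
    rcases Nat.mod_two_eq_zero_or_one k with hk | hk <;> rw [cast_mod2 k, hk]
    · norm_num
    · rw [nsmul_eq_mul]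
      rw [cast_mod2 (k + 2), show (k + 2) % 2 = 1 from by omega]
      norm_num
  have := mod2_of_cast key
  simpa using this


/-- Every hypergraph satisfying condition (†) has a `k`-uniform "generator". -/
theorem exists_generator {V : Type} (k : ℕ) (S : Set (Finset V)) (hd : Dagger k S) :
    ∃ G : Set (Finset V), ∀ e : Finset V, e.card = k + 1 →
      (e ∈ S ↔ cnt k G e % 2 = (k + 1) % 2) := by
  cases isEmpty_or_nonempty V with
  | inl h =>
    refine ⟨∅, fun e he => absurd he ?_⟩
    rw [Finset.eq_empty_of_isEmpty e]
    simp
  | inr h =>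
    obtain ⟨v₀⟩ := h
    refine ⟨{f | v₀ ∉ f ∧ ((insert v₀ f ∈ S) ↔ k % 2 = 0)}, fun e he => ?_⟩
    set G : Set (Finset V) := {f | v₀ ∉ f ∧ ((insert v₀ f ∈ S) ↔ k % 2 = 0)} with hG
    by_cases hv : v₀ ∈ e
    · by_cases hsIn : (e ∈ S) ↔ k % 2 = 0
      · have hfe : (e.powersetCard k).filter (fun f => f ∈ G) = {e.erase v₀} := by
          ext f
          simp only [Finset.mem_filter, Finset.mem_powersetCard, Finset.mem_singleton]
          constructor
          · rintro ⟨⟨hsub, hcard⟩, hG1, hG2⟩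
            exact Finset.eq_of_subset_of_card_le (Finset.subset_erase.mpr ⟨hsub, hG1⟩)
              (by rw [Finset.card_erase_of_mem hv, he, hcard]; omega)
          · rintro rfl
            refine ⟨⟨Finset.erase_subset _ _,
              by rw [Finset.card_erase_of_mem hv, he]; omega⟩, Finset.notMem_erase _ _, ?_⟩
            rw [Finset.insert_erase hv]
            exact hsIn
        have hc1 : cnt k G e = 1 := by rw [cnt_eq_card, hfe, Finset.card_singleton]
        rw [hc1]
        rcases Nat.mod_two_eq_zero_or_one k with hk | hk
        · have heS := hsIn.mpr hk
          simp only [heS, true_iff]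
          omega
        · have heS : e ∉ S := fun hh => by
            have := hsIn.mp hh
            omega
          have hne : ¬(1 % 2 = (k + 1) % 2) := by omega
          tauto
      · have hfe : (e.powersetCard k).filter (fun f => f ∈ G) = ∅ := by
          ext f
          simp only [Finset.mem_filter, Finset.mem_powersetCard, Finset.notMem_empty,
            iff_false, not_and]
          rintro ⟨hsub, hcard⟩ ⟨hG1, hG2⟩
          have hf : f = e.erase v₀ := Finset.eq_of_subset_of_card_le
            (Finset.subset_erase.mpr ⟨hsub, hG1⟩)
            (by rw [Finset.card_erase_of_mem hv, he, hcard]; omega)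
          rw [hf, Finset.insert_erase hv] at hG2
          exact hsIn hG2
        have hc0 : cnt k G e = 0 := by rw [cnt_eq_card, hfe, Finset.card_empty]
        rw [hc0]
        rcases Nat.mod_two_eq_zero_or_one k with hk | hk
        · have heS : e ∉ S := fun hh => hsIn ⟨fun _ => hk, fun _ => hh⟩
          have hne : ¬((0:ℕ) % 2 = (k + 1) % 2) := by omega
          tauto
        · have heS : e ∈ S := by
            by_contra hh
            exact hsIn ⟨fun h2 => absurd h2 hh, fun h2 => by omega⟩
          simp only [heS, true_iff]
          omega
    · set W : Finset V := insert v₀ e with hWdef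
      have hWcard : W.card = k + 2 := by
        rw [hWdef, Finset.card_insert_of_notMem hv, he]
      have hdW := hd W hWcard
      rw [setcard] at hdW
      rw [count_erase W (k+1) (by omega) (fun A => A ∈ S)] at hdW
      have hsplit : W.filter (fun y => W.erase y ∈ S)
          = if e ∈ S then insert v₀ (e.filter (fun y => W.erase y ∈ S))
            else e.filter (fun y => W.erase y ∈ S) := by
        rw [hWdef, Finset.filter_insert, Finset.erase_insert hv]
      have hv₀f : v₀ ∉ e.filter (fun y => W.erase y ∈ S) :=
        fun hh => hv (Finset.filter_subset _ _ hh)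
      have hcnt : cnt k G e = (e.filter (fun y => ((W.erase y ∈ S) ↔ k % 2 = 0))).card := by
        rw [cnt_eq_card, count_erase e k (by omega) (fun f => f ∈ G)]
        congr 1
        apply Finset.filter_congr
        intro y hy
        have hyne : v₀ ≠ y := fun hh => hv (hh ▸ hy)
        have hins : insert v₀ (e.erase y) = W.erase y := by
          rw [hWdef, Finset.erase_insert_of_ne hyne]
        constructor
        · rintro ⟨_, hG2⟩
          rw [hins] at hG2
          exact hG2
        · intro hiff
          exact ⟨fun hh => hv (Finset.erase_subset _ _ hh), by rw [hins]; exact hiff⟩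
      set p := (e.filter (fun y => W.erase y ∈ S)).card with hp
      rcases Nat.mod_two_eq_zero_or_one k with hk | hk
      · have hq : cnt k G e = p := by
          rw [hcnt, hp]
          congr 1
          apply Finset.filter_congr
          intro y _
          simp [hk]
        rw [hq]
        by_cases heS : e ∈ S
        · rw [hsplit, if_pos heS, Finset.card_insert_of_notMem hv₀f] at hdW
          simp only [heS, true_iff]
          omega
        · rw [hsplit, if_neg heS] at hdW
          have : ¬(p % 2 = (k + 1) % 2) := by omega
          tauto
      · have hpq : cnt k G e + p = k + 1 := by
          rw [hcnt, hp]
          have hcongr : e.filter (fun y => ((W.erase y ∈ S) ↔ k % 2 = 0))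
              = e.filter (fun y => ¬(W.erase y ∈ S)) := by
            apply Finset.filter_congr
            intro y _
            constructor
            · intro hiff hmem
              have := hiff.mp hmem
              omega
            · intro hnot
              exact ⟨fun hh => absurd hh hnot, fun hh => by omega⟩
          rw [hcongr, add_comm, Finset.card_filter_add_card_filter_not, he]
        by_cases heS : e ∈ S
        · rw [hsplit, if_pos heS, Finset.card_insert_of_notMem hv₀f] at hdW
          simp only [heS, true_iff]
          omega
        · rw [hsplit, if_neg heS] at hdW
          have : ¬(cnt k G e % 2 = (k + 1) % 2) := by omega
          tauto

/-- Transporting `cnt` along an injective map. -/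
lemma cnt_image {α β : Type} [DecidableEq β] (k : ℕ) (g : α → β) (e : Finset α)
    (G : Set (Finset α)) (G' : Set (Finset β)) (hinj : Set.InjOn g e)
    (hiff : ∀ f, f ⊆ e → f.card = k → (f ∈ G ↔ f.image g ∈ G')) :
    cnt k G' (e.image g) = cnt k G e := by
  classical
  rw [cnt_eq_card, cnt_eq_card]
  refine (Finset.card_bij (fun f _ => f.image g) ?_ ?_ ?_).symm
  · intro f hf
    obtain ⟨hf1, hf2⟩ := Finset.mem_filter.mp hf
    obtain ⟨hsub, hcard⟩ := Finset.mem_powersetCard.mp hf1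
    refine Finset.mem_filter.mpr ⟨Finset.mem_powersetCard.mpr
      ⟨Finset.image_subset_image hsub, ?_⟩, (hiff f hsub hcard).mp hf2⟩
    rw [Finset.card_image_of_injOn (hinj.mono hsub), hcard]
  · intro f1 hf1 f2 hf2 himg
    obtain ⟨hs1, _⟩ := Finset.mem_powersetCard.mp (Finset.mem_filter.mp hf1).1
    obtain ⟨hs2, _⟩ := Finset.mem_powersetCard.mp (Finset.mem_filter.mp hf2).1
    ext x
    constructor
    · intro hx
      have himg' : f1.image g = f2.image g := himg
      have : g x ∈ f2.image g := himg' ▸ Finset.mem_image_of_mem g hx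
      obtain ⟨y, hy, hxy⟩ := Finset.mem_image.mp this
      rwa [← hinj (hs2 hy) (hs1 hx) hxy]
    · intro hx
      have himg' : f1.image g = f2.image g := himg
      have : g x ∈ f1.image g := himg'.symm ▸ Finset.mem_image_of_mem g hx
      obtain ⟨y, hy, hxy⟩ := Finset.mem_image.mp this
      rwa [← hinj (hs1 hy) (hs2 hx) hxy]
  · intro f' hf'
    obtain ⟨hf1, hf2⟩ := Finset.mem_filter.mp hf'
    obtain ⟨hsub, hcard⟩ := Finset.mem_powersetCard.mp hf1
    obtain ⟨f, hfe, hfimg⟩ := Finset.subset_image_iff.mp hsub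
    have hfcard : f.card = k := by
      rw [← hcard, ← hfimg, Finset.card_image_of_injOn (hinj.mono hfe)]
    refine ⟨f, Finset.mem_filter.mpr ⟨Finset.mem_powersetCard.mpr ⟨hfe, hfcard⟩, ?_⟩, hfimg⟩
    rw [hiff f hfe hfcard, hfimg]
    exact hf2



lemma enc_pair_inj {m : ℕ} {x x' r r' : ℕ} (hr : r < m) (hr' : r' < m)
    (h : x * m + r = x' * m + r') : x = x' ∧ r = r' := by
  constructor
  · have := congrArg (· / m) h
    simpa [enc_div x hr, enc_div x' hr'] using this
  · have := congrArg (· % m) h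
    simpa [enc_mod x hr, enc_mod x' hr'] using this

/-- A partite system: a finite vertex set of naturals, with positions given by division by
the modulus `M`, together with a family of transversal copies of `Fin b`. -/
structure Sys (k b : ℕ) (GB : Set (Finset (Fin b))) where
  M : ℕ
  hM : 0 < M
  V : Finset ℕ
  copies : Set (Fin b → ℕ)
  hrange : ∀ φ ∈ copies, ∀ j, φ j ∈ V
  hpos : ∀ φ ∈ copies, StrictMono (fun j => φ j / M)
  hcoh : ∀ φ ∈ copies, ∀ ψ ∈ copies, ∀ f g : Finset (Fin b),
    Finset.image φ f = Finset.image ψ g → f.card = k → g.card = k → (f ∈ GB ↔ g ∈ GB)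

lemma Sys.mono {k b : ℕ} {GB : Set (Finset (Fin b))} (S : Sys k b GB)
    {φ : Fin b → ℕ} (h : φ ∈ S.copies) : StrictMono φ := by
  intro j j' hj
  have := S.hpos φ h hj
  by_contra hc
  exact absurd (Nat.div_le_div_right (not_lt.mp hc)) (not_le.mpr this)

/-- The Ramsey-type property of a system relative to a family `Fs` of position sets:
every colouring admits a coherent choice of copies over every `b`-subset of positions,
monochromatic over each `F ∈ Fs`. -/
def SysGood {k b : ℕ} {GB : Set (Finset (Fin b))} (n N : ℕ) (S : Sys k b GB)
    (Fs : Finset (Finset ℕ)) : Prop :=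
  ∀ χ : Finset ℕ → Fin n, ∃ (Ψ : Finset ℕ → (Fin b → ℕ)) (γ : Finset ℕ → Fin n),
    ∀ e : Finset ℕ, e.card = b → e ⊆ Finset.range N →
      Ψ e ∈ S.copies ∧
      Finset.image (fun j => Ψ e j / S.M) Finset.univ = e ∧
      ∀ F₁ ∈ Fs, F₁ ⊆ e →
        χ ((Finset.image (Ψ e) Finset.univ).filter (fun v => v / S.M ∈ F₁)) = γ F₁

theorem exists_good (k a b N n : ℕ) (hak : a < k) (GB : Set (Finset (Fin b))) :
    ∀ Fs : Finset (Finset ℕ), (∀ F ∈ Fs, F.card = a) →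
      ∃ S : Sys k b GB, SysGood n N S Fs := by
  intro Fs
  induction Fs using Finset.induction_on with
  | empty =>
    intro _
    -- base system: disjoint copies of `Fin b` over each `b`-subset of positions
    set M₀ : ℕ := ((Finset.range N).powersetCard b).sup (fun e => Encodable.encode e) + 1
      with hM₀
    have henc : ∀ e : Finset ℕ, e ⊆ Finset.range N → e.card = b →
        Encodable.encode e < M₀ := by
      intro e h1 h2
      have hmem : e ∈ (Finset.range N).powersetCard b := Finset.mem_powersetCard.mpr ⟨h1, h2⟩
      have hle : Encodable.encode e ≤
          ((Finset.range N).powersetCard b).sup (fun e => Encodable.encode e) :=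
        Finset.le_sup (f := fun e : Finset ℕ => Encodable.encode e) hmem
      omega
    set Ψ₀ : Finset ℕ → (Fin b → ℕ) := fun e =>
      if h : e.card = b then (fun j => (e.orderEmbOfFin h j) * M₀ + Encodable.encode e)
      else fun _ => 0 with hΨ₀
    have hΨ₀div : ∀ e (h1 : e ⊆ Finset.range N) (h2 : e.card = b) j,
        Ψ₀ e j / M₀ = e.orderEmbOfFin h2 j := by
      intro e h1 h2 j
      rw [hΨ₀]
      simp only [dif_pos h2]
      exact enc_div _ (henc e h1 h2)
    have hΨ₀mod : ∀ e (h1 : e ⊆ Finset.range N) (h2 : e.card = b) j,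
        Ψ₀ e j % M₀ = Encodable.encode e := by
      intro e h1 h2 j
      rw [hΨ₀]
      simp only [dif_pos h2]
      exact enc_mod _ (henc e h1 h2)
    refine ⟨⟨M₀, by omega,
      ((Finset.range N).powersetCard b).biUnion (fun e => Finset.image (Ψ₀ e) Finset.univ),
      {φ | ∃ e : Finset ℕ, e.card = b ∧ e ⊆ Finset.range N ∧ φ = Ψ₀ e}, ?_, ?_, ?_⟩, ?_⟩
    · rintro φ ⟨e, h2, h1, rfl⟩ j
      exact Finset.mem_biUnion.mpr ⟨e, Finset.mem_powersetCard.mpr ⟨h1, h2⟩,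
        Finset.mem_image_of_mem _ (Finset.mem_univ j)⟩
    · rintro φ ⟨e, h2, h1, rfl⟩ j j' hj
      have := hΨ₀div e h1 h2
      simp only [this]
      exact (e.orderEmbOfFin h2).strictMono hj
    · rintro φ ⟨e, h2, h1, rfl⟩ ψ ⟨e', h2', h1', rfl⟩ f g himg hf hg
      have hkpos : 0 < k := by omega
      have hfne : f.Nonempty := Finset.card_pos.mp (by omega)
      obtain ⟨x, hx⟩ := hfne
      have hmem : Ψ₀ e x ∈ Finset.image (Ψ₀ e') g := himg ▸ Finset.mem_image_of_mem _ hx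
      obtain ⟨y, hy, hxy⟩ := Finset.mem_image.mp hmem
      have hee' : e = e' := by
        have h1e := hΨ₀mod e h1 h2 x
        have h2e := hΨ₀mod e' h1' h2' y
        rw [hxy] at h2e
        exact Encodable.encode_injective (h1e ▸ h2e)
      subst hee'
      have hinj : Function.Injective (Ψ₀ e) := by
        intro u v huv
        have := congrArg (· / M₀) huv
        simp only [hΨ₀div e h1 h2] at this
        exact (e.orderEmbOfFin h2).injective this
      rw [Finset.image_injective hinj himg]
    · intro χ
      refine ⟨Ψ₀, fun _ => χ ∅, fun e h2 h1 => ⟨⟨e, h2, h1, rfl⟩, ?_, fun F₁ hF₁ => absurd hF₁ (Finset.notMem_empty _)⟩⟩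
      have himg : Finset.image (fun j => Ψ₀ e j / M₀) Finset.univ
          = Finset.image (fun j => e.orderEmbOfFin h2 j) Finset.univ := by
        apply Finset.image_congr
        intro j _
        exact hΨ₀div e h1 h2 j
      rw [himg]
      apply Finset.eq_of_subset_of_card_le
      · intro v hv
        obtain ⟨j, _, rfl⟩ := Finset.mem_image.mp hv
        exact Finset.orderEmbOfFin_mem e h2 j
      · rw [Finset.card_image_of_injective _ (e.orderEmbOfFin h2).injective,
          Finset.card_univ, Fintype.card_fin, h2]
  | @insert F₀ Fs' hF₀Fs ih =>
    intro hcards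
    have hF₀ : F₀.card = a := hcards F₀ (Finset.mem_insert_self _ _)
    obtain ⟨S, hSGood⟩ := ih (fun F hF => hcards F (Finset.mem_insert_of_mem hF))
    set iso := F₀.orderIsoOfFin hF₀ with hiso
    set s_ : Fin a → ℕ := fun i => (iso i : ℕ) with hs_
    set Xf : Fin a → Finset ℕ := fun i => S.V.filter (fun v => v / S.M = s_ i) with hXf
    obtain ⟨U₀, hU⟩ := gridRamsey a (fun i => ↥(Xf i)) (Fin n)
    set I := ∀ i : Fin a, (↥(Xf i) ↪ Fin U₀) with hI
    set cI := Fintype.card I with hcI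
    set eI := Fintype.equivFin I with heI
    set M' : ℕ := U₀ + cI * S.M + S.M with hM'
    have hM'pos : 0 < M' := by have := S.hM; omega
    -- the lifting maps
    set lrem : I → ℕ → ℕ := fun ι v =>
      if h : v ∈ S.V ∧ v / S.M ∈ F₀ then
        (ι (iso.symm ⟨v / S.M, h.2⟩)
          ⟨v, Finset.mem_filter.mpr ⟨h.1, by simp [hs_]⟩⟩ : Fin U₀).val
      else U₀ + (eI ι).val * S.M + v % S.M with hlrem
    set lift : I → ℕ → ℕ := fun ι v => (v / S.M) * M' + lrem ι v with hlift
    have hlrem_lt : ∀ ι v, lrem ι v < M' := by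
      intro ι v
      simp only [hlrem]
      split
      · refine lt_of_lt_of_le (Fin.is_lt _) ?_
        omega
      · have h1 : (eI ι).val < cI := (eI ι).isLt
        have h2 : v % S.M < S.M := Nat.mod_lt _ S.hM
        have : (eI ι).val * S.M ≤ (cI - 1) * S.M := Nat.mul_le_mul_right _ (by omega)
        have : (cI - 1) * S.M + S.M = cI * S.M := by
          have : 1 ≤ cI := by omega
          calc (cI - 1) * S.M + S.M = (cI - 1 + 1) * S.M := by ring
          _ = cI * S.M := by rw [Nat.sub_add_cancel this]
        omega
    have hlift_div : ∀ ι v, lift ι v / M' = v / S.M := fun ι v =>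
      enc_div _ (hlrem_lt ι v)
    have hlift_mod : ∀ ι v, lift ι v % M' = lrem ι v := fun ι v =>
      enc_mod _ (hlrem_lt ι v)
    have hlrem_fiber_lt : ∀ ι v, (v ∈ S.V ∧ v / S.M ∈ F₀) → lrem ι v < U₀ := by
      intro ι v h
      simp only [hlrem, dif_pos h]
      exact Fin.is_lt _
    have hlrem_sheet : ∀ ι v, ¬(v ∈ S.V ∧ v / S.M ∈ F₀) →
        lrem ι v = U₀ + (eI ι).val * S.M + v % S.M := by
      intro ι v h
      simp only [hlrem, dif_neg h]
    have emb_val_inj : ∀ (ι : I) (i₁ i₂ : Fin a) (x₁ : ↥(Xf i₁)) (x₂ : ↥(Xf i₂)),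
        i₁ = i₂ → ((ι i₁ x₁ : Fin U₀) : ℕ) = ((ι i₂ x₂ : Fin U₀) : ℕ) →
          (x₁ : ℕ) = (x₂ : ℕ) := by
      rintro ι i₁ i₂ x₁ x₂ rfl hval
      exact congrArg Subtype.val ((ι i₁).injective (Fin.val_injective hval))
    have emb_congr : ∀ (ι : I) (i₁ i₂ : Fin a) (x₁ : ↥(Xf i₁)) (x₂ : ↥(Xf i₂)),
        i₁ = i₂ → (x₁ : ℕ) = (x₂ : ℕ) →
          ((ι i₁ x₁ : Fin U₀) : ℕ) = ((ι i₂ x₂ : Fin U₀) : ℕ) := by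
      rintro ι i₁ i₂ x₁ x₂ rfl hx
      rw [Subtype.ext hx]
    have hmod_recover : ∀ v w : ℕ, v / S.M = w / S.M → v % S.M = w % S.M → v = w := by
      intro v w h1 h2
      calc v = S.M * (v / S.M) + v % S.M := (Nat.div_add_mod v S.M).symm
        _ = S.M * (w / S.M) + w % S.M := by rw [h1, h2]
        _ = w := Nat.div_add_mod w S.M
    have hmatch : ∀ ι ι' v w, lift ι v = lift ι' w →
        ¬(v ∈ S.V ∧ v / S.M ∈ F₀) →
          ¬(w ∈ S.V ∧ w / S.M ∈ F₀) ∧ ι = ι' ∧ v = w := by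
      intro ι ι' v w heq hv
      simp only [hlift] at heq
      obtain ⟨hdiv, hrem⟩ := enc_pair_inj (hlrem_lt ι v) (hlrem_lt ι' w) heq
      rw [hlrem_sheet ι v hv] at hrem
      by_cases hw : w ∈ S.V ∧ w / S.M ∈ F₀
      · exfalso
        have := hlrem_fiber_lt ι' w hw
        omega
      · rw [hlrem_sheet ι' w hw] at hrem
        have hrem' : (eI ι).val * S.M + v % S.M = (eI ι').val * S.M + w % S.M := by omega
        obtain ⟨hidx, hmod⟩ := enc_pair_inj (Nat.mod_lt _ S.hM) (Nat.mod_lt _ S.hM) hrem'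
        refine ⟨hw, eI.injective (Fin.val_injective hidx), hmod_recover v w hdiv hmod⟩
    have hlift_inj : ∀ ι, Function.Injective (lift ι) := by
      intro ι v w heq
      simp only [hlift] at heq
      obtain ⟨hdiv, hrem⟩ := enc_pair_inj (hlrem_lt ι v) (hlrem_lt ι w) heq
      by_cases hv : v ∈ S.V ∧ v / S.M ∈ F₀ <;> by_cases hw : w ∈ S.V ∧ w / S.M ∈ F₀
      · simp only [hlrem, dif_pos hv, dif_pos hw] at hrem
        exact emb_val_inj ι _ _ _ _ (congrArg iso.symm (Subtype.ext hdiv)) hrem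
      · exfalso
        have := hlrem_fiber_lt ι v hv
        rw [hlrem_sheet ι w hw] at hrem
        omega
      · exfalso
        have := hlrem_fiber_lt ι w hw
        rw [hlrem_sheet ι v hv] at hrem
        omega
      · rw [hlrem_sheet ι v hv, hlrem_sheet ι w hw] at hrem
        exact hmod_recover v w hdiv (by omega)
    -- the new system
    refine ⟨⟨M', hM'pos,
      (Finset.univ : Finset I).biUnion (fun ι => S.V.image (lift ι)),
      {ψ | ∃ ι : I, ∃ φ ∈ S.copies, ψ = fun j => lift ι (φ j)}, ?_, ?_, ?_⟩, ?_⟩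
    · rintro ψ ⟨ι, φ, hφ, rfl⟩ j
      exact Finset.mem_biUnion.mpr ⟨ι, Finset.mem_univ ι,
        Finset.mem_image_of_mem _ (S.hrange φ hφ j)⟩
    · rintro ψ ⟨ι, φ, hφ, rfl⟩ j j' hj
      have h := S.hpos φ hφ hj
      simpa only [hlift_div] using h
    · rintro ψ₁ ⟨ι₁, φ₁, hφ₁, rfl⟩ ψ₂ ⟨ι₂, φ₂, hφ₂, rfl⟩ f g himg hf hg
      have hposinj₁ : Set.InjOn (fun j => φ₁ j / S.M) ↑f :=
        fun u _ v _ h => (S.hpos φ₁ hφ₁).injective h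
      have hxh : ∃ x ∈ f, ¬(φ₁ x ∈ S.V ∧ φ₁ x / S.M ∈ F₀) := by
        by_contra hc
        push_neg at hc
        have hsub : Finset.image (fun j => φ₁ j / S.M) f ⊆ F₀ := by
          intro p hp
          obtain ⟨x, hx, rfl⟩ := Finset.mem_image.mp hp
          exact (hc x hx).2
        have hcard : (Finset.image (fun j => φ₁ j / S.M) f).card = k := by
          rw [Finset.card_image_of_injOn hposinj₁, hf]
        have := Finset.card_le_card hsub
        omega
      obtain ⟨xh, hxhf, hxhsheet⟩ := hxh
      have hmem : lift ι₁ (φ₁ xh) ∈ Finset.image (fun j => lift ι₂ (φ₂ j)) g :=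
        himg ▸ Finset.mem_image_of_mem _ hxhf
      obtain ⟨yh, hyh, heq⟩ := Finset.mem_image.mp hmem
      obtain ⟨-, hii, -⟩ := hmatch ι₁ ι₂ (φ₁ xh) (φ₂ yh) heq.symm hxhsheet
      subst hii
      have himg' : Finset.image φ₁ f = Finset.image φ₂ g := by
        apply Finset.image_injective (hlift_inj ι₁)
        rw [Finset.image_image, Finset.image_image]
        exact himg
      exact S.hcoh φ₁ hφ₁ φ₂ hφ₂ f g himg' hf hg
    · -- SysGood for the new system
      intro χ'
      set χg : (Fin a → Fin U₀) → Fin n := fun t =>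
        χ' (Finset.image (fun i => s_ i * M' + (t i).val) Finset.univ) with hχg
      obtain ⟨ι, c₀, hι⟩ := hU U₀ le_rfl χg
      obtain ⟨Ψ, γ, hΨ⟩ := hSGood (fun w => χ' (w.image (lift ι)))
      refine ⟨fun e => fun j => lift ι (Ψ e j), fun F₁ => if F₁ = F₀ then c₀ else γ F₁, ?_⟩
      intro e hb hrangee
      obtain ⟨h1, h2, h3⟩ := hΨ e hb hrangee
      have hposinj : Function.Injective (fun j => Ψ e j / S.M) := (S.hpos _ h1).injective
      refine ⟨⟨ι, Ψ e, h1, rfl⟩, ?_, ?_⟩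
      · show Finset.image (fun j => lift ι (Ψ e j) / M') Finset.univ = e
        calc Finset.image (fun j => lift ι (Ψ e j) / M') Finset.univ
            = Finset.image (fun j => Ψ e j / S.M) Finset.univ :=
              Finset.image_congr (fun j _ => hlift_div ι (Ψ e j))
          _ = e := h2
      · intro F₁ hF₁mem hF₁e
        have hcomm : (Finset.image (fun j => lift ι (Ψ e j)) Finset.univ).filter
              (fun v => v / M' ∈ F₁)
            = Finset.image (lift ι)
                ((Finset.image (Ψ e) Finset.univ).filter (fun v => v / S.M ∈ F₁)) := by
          have himg2 : Finset.image (fun j => lift ι (Ψ e j)) Finset.univ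
              = Finset.image (lift ι) (Finset.image (Ψ e) Finset.univ) := by
            rw [Finset.image_image]
            rfl
          rw [himg2, Finset.filter_image]
          congr 1
          apply Finset.filter_congr
          intro v _
          rw [hlift_div]
        show χ' ((Finset.image (fun j => lift ι (Ψ e j)) Finset.univ).filter
            (fun v => v / M' ∈ F₁)) = if F₁ = F₀ then c₀ else γ F₁
        by_cases hFF : F₁ = F₀
        · cases hFF
          rw [if_pos rfl, hcomm]
          have hxex : ∀ i : Fin a, ∃ j : Fin b, Ψ e j / S.M = s_ i := by
            intro i
            have hsi : s_ i ∈ e := hF₁e (iso i).2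
            rw [← h2] at hsi
            obtain ⟨j, _, hj⟩ := Finset.mem_image.mp hsi
            exact ⟨j, hj⟩
          set xs : ∀ i : Fin a, ↥(Xf i) := fun i =>
            ⟨Ψ e (hxex i).choose,
              Finset.mem_filter.mpr ⟨S.hrange _ h1 _, (hxex i).choose_spec⟩⟩ with hxs
          have hkey : Finset.image (lift ι)
                ((Finset.image (Ψ e) Finset.univ).filter (fun v => v / S.M ∈ F₀))
              = Finset.image (fun i => s_ i * M' + ((ι i) (xs i)).val) Finset.univ := by
            apply Finset.Subset.antisymm
            · intro u hu
              obtain ⟨v, hv, rfl⟩ := Finset.mem_image.mp hu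
              obtain ⟨hvim, hvF⟩ := Finset.mem_filter.mp hv
              obtain ⟨j, -, rfl⟩ := Finset.mem_image.mp hvim
              have hcond : Ψ e j ∈ S.V ∧ Ψ e j / S.M ∈ F₀ := ⟨S.hrange _ h1 j, hvF⟩
              set i := iso.symm ⟨Ψ e j / S.M, hvF⟩ with hidef
              have h_si : s_ i = Ψ e j / S.M := by
                show ((iso (iso.symm ⟨Ψ e j / S.M, hvF⟩)) : ℕ) = Ψ e j / S.M
                rw [OrderIso.apply_symm_apply]
              have hji : (hxex i).choose = j :=
                hposinj (show Ψ e (hxex i).choose / S.M = Ψ e j / S.M by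
                  rw [(hxex i).choose_spec, h_si])
              refine Finset.mem_image.mpr ⟨i, Finset.mem_univ i, ?_⟩
              simp only [hlift, hlrem, dif_pos hcond]
              congr 1
              · rw [h_si]
              · exact emb_congr ι i _ (xs i) _ rfl
                  (show Ψ e (hxex i).choose = Ψ e j from congrArg (Ψ e) hji)
            · intro u hu
              obtain ⟨i, -, rfl⟩ := Finset.mem_image.mp hu
              have hj := (hxex i).choose_spec
              have hvS : Ψ e (hxex i).choose ∈ S.V := S.hrange _ h1 _
              have hvF : Ψ e (hxex i).choose / S.M ∈ F₀ := by
                rw [hj, hs_]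
                exact (iso i).2
              have hcond : Ψ e (hxex i).choose ∈ S.V ∧
                  Ψ e (hxex i).choose / S.M ∈ F₀ := ⟨hvS, hvF⟩
              refine Finset.mem_image.mpr ⟨Ψ e (hxex i).choose,
                Finset.mem_filter.mpr
                  ⟨Finset.mem_image_of_mem _ (Finset.mem_univ _), hvF⟩, ?_⟩
              simp only [hlift, hlrem, dif_pos hcond]
              have hieq : iso.symm ⟨Ψ e (hxex i).choose / S.M, hvF⟩ = i := by
                have hsub : (⟨Ψ e (hxex i).choose / S.M, hvF⟩ : ↥F₀) = iso i :=
                  Subtype.ext (show Ψ e (hxex i).choose / S.M = ((iso i : ↥F₀) : ℕ) from hj)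
                rw [hsub, OrderIso.symm_apply_apply]
              have hval : ((ι (iso.symm ⟨Ψ e (hxex i).choose / S.M, hvF⟩))
                  ⟨Ψ e (hxex i).choose, Finset.mem_filter.mpr ⟨hcond.1, by
                    show Ψ e (hxex i).choose / S.M
                      = s_ (iso.symm ⟨Ψ e (hxex i).choose / S.M, hvF⟩)
                    show Ψ e (hxex i).choose / S.M
                      = ((iso (iso.symm ⟨Ψ e (hxex i).choose / S.M, hvF⟩)) : ℕ)
                    rw [OrderIso.apply_symm_apply]⟩⟩ : Fin U₀).val
                  = ((ι i) (xs i)).val :=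
                emb_congr ι _ i _ (xs i) hieq rfl
              rw [hval, hj]
          rw [hkey]
          exact hι xs
        · rw [if_neg hFF, hcomm]
          have hF₁Fs : F₁ ∈ Fs' := by
            rcases Finset.mem_insert.mp hF₁mem with h | h
            · exact absurd h hFF
            · exact h
          exact h3 F₁ hF₁Fs hF₁e


end KCSR

open KCSR in
/-- In the class `K(H_o^k)` of finite ordered `(k+1)`-uniform hypergraphs satisfying
condition (†), every structure with at most `k - 1` vertices is a Ramsey object. -/
theorem kay_class_small_ramsey_objects (k : ℕ) (hk : 3 ≤ k) :
    ∀ A ∈ {H : OrdHyp (k + 1) | Dagger k H.S}, Fintype.card A.V ≤ k - 1 →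
      RamseyObject {H : OrdHyp (k + 1) | Dagger k H.S} A := by
  intro A hA hcard B hB n
  rcases Nat.eq_zero_or_pos n with hn | hn
  · subst hn
    have hid : IsEmb B B id := ⟨strictMono_id, fun e _ => by rw [Finset.image_id]⟩
    exact ⟨B, hB, fun χ => ⟨⟨id, hid⟩, fun f f' => (χ (Emb.comp ⟨id, hid⟩ f)).elim0⟩⟩
  set a := Fintype.card A.V with ha
  have hak : a < k := by omega
  set b := Fintype.card B.V with hb
  set σ : Fin a ≃o A.V := Fintype.orderIsoFinOfCardEq A.V rfl with hσ
  set ρ : Fin b ≃o B.V := Fintype.orderIsoFinOfCardEq B.V rfl with hρ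
  obtain ⟨GB', hGB'⟩ := exists_generator k B.S hB
  set GB : Set (Finset (Fin b)) := {f | Finset.image (fun j => ρ j) f ∈ GB'} with hGB
  obtain ⟨N, hN⟩ := finRamsey a n b
  obtain ⟨St, hGood⟩ := exists_good k a b N n hak GB ((Finset.range N).powersetCard a)
    (fun F hF => (Finset.mem_powersetCard.mp hF).2)
  set GC : Set (Finset ℕ) := {w | ∃ φ ∈ St.copies, ∃ f₀ : Finset (Fin b),
    f₀.card = k ∧ f₀ ∈ GB ∧ w = Finset.image φ f₀} with hGC
  set Gsub : Set (Finset {x // x ∈ St.V}) :=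
    {f | Finset.image (fun x : {x // x ∈ St.V} => (x : ℕ)) f ∈ GC} with hGsub
  set C : OrdHyp (k+1) :=
    { V := {x // x ∈ St.V}
      fin := FinsetCoe.fintype _
      ord := inferInstance
      S := {E | E.card = k + 1 ∧ cnt k Gsub E % 2 = (k + 1) % 2}
      uniform := fun e he => he.1 } with hCdef
  have hCdagger : Dagger k C.S := dagger_gen k Gsub
  refine ⟨C, hCdagger, ?_⟩
  intro χ
  haveI hFinN : Nonempty (Fin n) := ⟨⟨0, hn⟩⟩
  set χh : Finset ℕ → Fin n := fun w =>
    @dite _ (∃ em : Emb A C, w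
        = Finset.image (fun x => ((em.1 x : {x // x ∈ St.V}) : ℕ)) Finset.univ)
      (Classical.dec _) (fun h => χ h.choose) (fun _ => Classical.arbitrary _) with hχh
  obtain ⟨Ψ, γ, hΨ⟩ := hGood χh
  obtain ⟨H, c, hHrange, hHcard, hmono⟩ := hN (Finset.range N)
    (by rw [Finset.card_range]) γ
  obtain ⟨h1, h2, h3⟩ := hΨ H hHcard hHrange
  have hmonoΨ : StrictMono (Ψ H) := Sys.mono St h1
  have hrangeΨ : ∀ j, Ψ H j ∈ St.V := St.hrange _ h1
  set gfun : B.V → {x // x ∈ St.V} := fun v => ⟨Ψ H (ρ.symm v), hrangeΨ _⟩ with hgfun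
  have hgmono : StrictMono gfun := by
    intro v w hvw
    exact Subtype.mk_lt_mk.mpr (hmonoΨ ((OrderIso.strictMono ρ.symm) hvw))
  have hbridge : ∀ f : Finset B.V, f.card = k →
      (f ∈ GB' ↔ Finset.image gfun f ∈ Gsub) := by
    intro f hfk
    set f₁ : Finset (Fin b) := Finset.image (fun v => ρ.symm v) f with hf₁
    have hf₁card : f₁.card = k := by
      rw [hf₁, Finset.card_image_of_injective _ (fun x y h => ρ.symm.injective h), hfk]
    have himgf : Finset.image (fun j => ρ j) f₁ = f := by
      rw [hf₁, Finset.image_image]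
      have : ((fun j => ρ j) ∘ fun v => ρ.symm v) = id := by
        funext v
        simp
      rw [this, Finset.image_id]
    have hGBiff : f ∈ GB' ↔ f₁ ∈ GB := by
      constructor
      · intro hf
        show Finset.image (fun j => ρ j) f₁ ∈ GB'
        rw [himgf]
        exact hf
      · intro hf
        have : Finset.image (fun j => ρ j) f₁ ∈ GB' := hf
        rwa [himgf] at this
    have himg2 : Finset.image (fun x : {x // x ∈ St.V} => (x : ℕ)) (Finset.image gfun f)
        = Finset.image (Ψ H) f₁ := by
      rw [Finset.image_image, hf₁, Finset.image_image]
      rfl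
    have hGCiff : f₁ ∈ GB ↔ Finset.image (Ψ H) f₁ ∈ GC := by
      constructor
      · intro hf
        exact ⟨Ψ H, h1, f₁, hf₁card, hf, rfl⟩
      · rintro ⟨ψ, hψ, f₀, hf₀c, hf₀, heq⟩
        exact (St.hcoh ψ hψ (Ψ H) h1 f₀ f₁ heq.symm hf₀c hf₁card).mp hf₀
    rw [hGBiff, hGCiff]
    rw [show (Finset.image gfun f ∈ Gsub)
        = (Finset.image (fun x : {x // x ∈ St.V} => (x : ℕ)) (Finset.image gfun f) ∈ GC)
      from rfl, himg2]
  have hgemb : IsEmb B C gfun := by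
    refine ⟨hgmono, fun E hE => ?_⟩
    have hinj : Set.InjOn gfun E := fun x _ y _ h => hgmono.injective h
    have hEcard : (Finset.image gfun E).card = k + 1 := by
      rw [Finset.card_image_of_injOn hinj, hE]
    have hcnt : cnt k Gsub (Finset.image gfun E) = cnt k GB' E :=
      cnt_image k gfun E GB' Gsub hinj (fun f hf hfk => hbridge f hfk)
    rw [hGB' E hE]
    constructor
    · intro hpar
      exact ⟨hEcard, by rw [← hpar]; exact congrArg (· % 2) (by convert hcnt)⟩
    · rintro ⟨-, hpar⟩
      rw [← hcnt]
      exact hpar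
  have hemb_uniq : ∀ em₁ em₂ : Emb A C,
      Finset.image (fun x => ((em₁.1 x : {x // x ∈ St.V}) : ℕ)) Finset.univ
        = Finset.image (fun x => ((em₂.1 x : {x // x ∈ St.V}) : ℕ)) Finset.univ →
        em₁ = em₂ := by
    intro em₁ em₂ himg
    have hinj₁ : Function.Injective (fun x => ((em₁.1 x : {x // x ∈ St.V}) : ℕ)) :=
      fun x y h => em₁.2.1.injective (Subtype.ext h)
    have hscard : (Finset.image (fun x => ((em₁.1 x : {x // x ∈ St.V}) : ℕ))
        Finset.univ).card = a := by
      rw [Finset.card_image_of_injective _ hinj₁, Finset.card_univ]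
    have hmono₁ : StrictMono (fun t : Fin a => ((em₁.1 (σ t) : {x // x ∈ St.V}) : ℕ)) := by
      intro t t' ht
      exact Subtype.coe_lt_coe.mpr (em₁.2.1 (σ.strictMono ht))
    have hmono₂ : StrictMono (fun t : Fin a => ((em₂.1 (σ t) : {x // x ∈ St.V}) : ℕ)) := by
      intro t t' ht
      exact Subtype.coe_lt_coe.mpr (em₂.2.1 (σ.strictMono ht))
    have hu₁ := Finset.orderEmbOfFin_unique hscard
      (f := fun t : Fin a => ((em₁.1 (σ t) : {x // x ∈ St.V}) : ℕ))
      (fun t => Finset.mem_image_of_mem _ (Finset.mem_univ _)) hmono₁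
    have hu₂ := Finset.orderEmbOfFin_unique hscard
      (f := fun t : Fin a => ((em₂.1 (σ t) : {x // x ∈ St.V}) : ℕ))
      (fun t => by
        rw [himg]
        exact Finset.mem_image_of_mem _ (Finset.mem_univ _)) hmono₂
    have hfe := hu₁.trans hu₂.symm
    apply Subtype.ext
    funext v
    have := congrFun hfe (σ.symm v)
    simp only [OrderIso.apply_symm_apply] at this
    exact Subtype.ext this
  refine ⟨⟨gfun, hgemb⟩, ?_⟩
  have key : ∀ f : Emb A B, χ (Emb.comp ⟨gfun, hgemb⟩ f) = c := by
    intro f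
    set em : Emb A C := Emb.comp ⟨gfun, hgemb⟩ f with hem
    set t : Finset (Fin b) := Finset.image (fun x => ρ.symm (f.1 x)) Finset.univ with ht
    have htcard : t.card = a := by
      rw [ht, Finset.card_image_of_injective _
        (fun x y h => f.2.1.injective (ρ.symm.injective h)), Finset.card_univ]
    have himem : Finset.image (fun x => ((em.1 x : {x // x ∈ St.V}) : ℕ)) Finset.univ
        = Finset.image (Ψ H) t := by
      rw [ht, Finset.image_image]
      rfl
    set F : Finset ℕ := Finset.image (fun v => v / St.M) (Finset.image (Ψ H) t) with hF
    have hposinj : Function.Injective (fun j => Ψ H j / St.M) := (St.hpos _ h1).injective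
    have hFcard : F.card = a := by
      rw [hF, Finset.image_image, Finset.card_image_of_injective _
        (show Function.Injective ((fun v => v / St.M) ∘ Ψ H) from fun x y h => hposinj h),
        htcard]
    have hFsubH : F ⊆ H := by
      intro p hp
      rw [hF, Finset.image_image] at hp
      obtain ⟨j, _, rfl⟩ := Finset.mem_image.mp hp
      have hmem : Ψ H j / St.M ∈ Finset.image (fun j => Ψ H j / St.M) Finset.univ :=
        Finset.mem_image_of_mem _ (Finset.mem_univ _)
      rw [h2] at hmem
      exact hmem
    have hFmem : F ∈ (Finset.range N).powersetCard a :=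
      Finset.mem_powersetCard.mpr ⟨hFsubH.trans hHrange, hFcard⟩
    have hfilter : (Finset.image (Ψ H) Finset.univ).filter (fun v => v / St.M ∈ F)
        = Finset.image (Ψ H) t := by
      apply Finset.Subset.antisymm
      · intro v hv
        obtain ⟨hv1, hv2⟩ := Finset.mem_filter.mp hv
        obtain ⟨j, _, rfl⟩ := Finset.mem_image.mp hv1
        rw [hF, Finset.image_image] at hv2
        obtain ⟨j', hj', hjj⟩ := Finset.mem_image.mp hv2
        have : j' = j := hposinj hjj
        rw [← this]
        exact Finset.mem_image_of_mem _ hj'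
      · intro v hv
        obtain ⟨j, hj, rfl⟩ := Finset.mem_image.mp hv
        refine Finset.mem_filter.mpr ⟨Finset.mem_image_of_mem _ (Finset.mem_univ _), ?_⟩
        rw [hF, Finset.image_image]
        exact Finset.mem_image_of_mem _ hj
    have hχh_em : χh (Finset.image (fun x => ((em.1 x : {x // x ∈ St.V}) : ℕ)) Finset.univ)
        = χ em := by
      simp only [hχh]
      have hex : ∃ em' : Emb A C,
          Finset.image (fun x => ((em.1 x : {x // x ∈ St.V}) : ℕ)) Finset.univ
          = Finset.image (fun x => ((em'.1 x : {x // x ∈ St.V}) : ℕ)) Finset.univ :=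
        ⟨em, rfl⟩
      rw [dif_pos hex]
      exact congrArg χ (hemb_uniq _ _ hex.choose_spec.symm)
    have hkey := h3 F hFmem hFsubH
    rw [hfilter, ← himem, hχh_em] at hkey
    rw [hkey]
    exact hmono F hFsubH hFcard
  intro f f'
  rw [key f, key f']
end

section
/- Fix k ∈ ℕ with k ≥ 3, and let K(H_o^k) be the class of finite ordered (k+1)-uniform hypergraphs satisfying condition (†). Let A_k be the structure in K(H_o^k) with exactly k linearly ordered vertices and empty hyperedge set. Then A_k is not a Ramsey object for K(H_o^k): there exists B in K(H_o^k) such that for every C in K(H_o^k) there is a colouring χ : Emb(A_k, C) → Fin 2 such that for every embedding g ∈ Emb(B, C), the map f ↦ χ(g ∘ f) is not constant on Emb(A_k, B). -/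
/-- The ordered `(k+1)`-uniform hypergraph with exactly `k` linearly ordered vertices and
no hyperedges. -/
def Ak (k : ℕ) : OrdHyp (k + 1) where
  V := Fin k
  fin := inferInstance
  ord := inferInstance
  S := ∅
  uniform := fun e he => absurd he (Set.notMem_empty e)

/-! ### Auxiliary material -/

lemma erase_univ_inj {n : ℕ} {a b : Fin n} (h : Finset.univ.erase a = Finset.univ.erase b) :
    a = b := by
  by_contra hab
  have : a ∈ Finset.univ.erase b := Finset.mem_erase.2 ⟨hab, Finset.mem_univ a⟩
  rw [← h] at this
  exact (Finset.notMem_erase a _) this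

/-- The hyperedge set of the witness structure `B`: the `k` many `(k+1)`-element subsets
of `Fin (k+2)` obtained by deleting one of the first `k` vertices. -/
def SB (k : ℕ) : Set (Finset (Fin (k + 2))) :=
  (fun j : Fin k => Finset.univ.erase (Fin.castLE (by omega) j)) '' Set.univ

lemma SB_card (k : ℕ) : ∀ e ∈ SB k, e.card = k + 1 := by
  rintro e ⟨j, -, rfl⟩
  rw [Finset.card_erase_of_mem (Finset.mem_univ _), Finset.card_univ]
  simp

lemma SB_dagger (k : ℕ) : Dagger k (SB k) := by
  intro W hW
  have hWu : W = Finset.univ := Finset.eq_univ_of_card W (by simpa using hW)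
  have hset : {A : Finset (Fin (k+2)) | A ⊆ W ∧ A.card = k + 1 ∧ A ∈ SB k} = SB k := by
    ext A
    simp only [Set.mem_setOf_eq, hWu]
    exact ⟨fun h => h.2.2, fun h => ⟨Finset.subset_univ _, SB_card k A h, h⟩⟩
  rw [hset]
  have hinj : Function.Injective
      (fun j : Fin k => (Finset.univ.erase (Fin.castLE (by omega) j) : Finset (Fin (k+2)))) :=
    fun a b hab => Fin.castLE_injective _ (erase_univ_inj hab)
  have : (SB k).ncard = k := by
    rw [SB, Set.ncard_image_of_injective _ hinj, Set.ncard_univ]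
    simp
  rw [this]

/-- The witness structure `B`: `k+2` vertices and `k` hyperedges. -/
def Bhyp (k : ℕ) : OrdHyp (k + 1) where
  V := Fin (k + 2)
  fin := inferInstance
  ord := inferInstance
  S := SB k
  uniform := SB_card k

lemma Bhyp_dagger (k : ℕ) : Dagger k (Bhyp k).S := SB_dagger k

section Cochain

variable {V : Type} [DecidableEq V] {k : ℕ} {S : Set (Finset V)}

open Classical in
/-- The mod-2 indicator of the complement of `S`. -/
noncomputable def tfun (S : Set (Finset V)) (e : Finset V) : ZMod 2 :=
  if e ∈ S then 0 else 1

omit [DecidableEq V] in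
lemma sum_tfun (hS : Dagger k S) {W : Finset V} (hW : W.card = k + 2) :
    ∑ e ∈ W.powersetCard (k + 1), tfun S e = 0 := by
  classical
  set P := W.powersetCard (k + 1) with hP
  have h1 : ∑ e ∈ P, tfun S e = ((P.filter (fun e => ¬ e ∈ S)).card : ZMod 2) := by
    rw [← Finset.sum_boole]
    refine Finset.sum_congr rfl fun e _ => ?_
    by_cases he : e ∈ S <;> simp [tfun, he]
  have hsplit : (P.filter (fun e => ¬ e ∈ S)).card + (P.filter (fun e => e ∈ S)).card = k + 2 := by
    rw [add_comm, Finset.card_filter_add_card_filter_not]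
    rw [hP, Finset.card_powersetCard, hW]
    simp [Nat.choose_succ_self_right]
  have hdag : (P.filter (fun e => e ∈ S)).card % 2 = k % 2 := by
    have hset : {A : Finset V | A ⊆ W ∧ A.card = k + 1 ∧ A ∈ S}
        = ↑(P.filter (fun e => e ∈ S)) := by
      ext A
      simp [hP, Finset.mem_powersetCard, Set.mem_setOf_eq, and_assoc]
    have := hS W hW
    rwa [hset, Set.ncard_coe_finset] at this
  rw [h1]
  have hm : ((P.filter (fun e => e ∈ S)).card : ZMod 2) = (k : ZMod 2) :=
    (ZMod.natCast_eq_natCast_iff _ _ _).2 hdag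
  have := congrArg (fun n : ℕ => (n : ZMod 2)) hsplit
  push_cast at this
  rw [hm] at this
  have h2 : (2 : ZMod 2) = 0 := by decide
  linear_combination this + h2

/-- The cone of `tfun S` over a base vertex `v₀`: an explicit mod-2 `k`-cochain whose
coboundary is `tfun S`. -/
noncomputable def ufun (S : Set (Finset V)) (v₀ : V) (A : Finset V) : ZMod 2 :=
  if v₀ ∈ A then 0 else tfun S (insert v₀ A)

lemma sum_ufun (hS : Dagger k S) (v₀ : V) {e : Finset V} (he : e.card = k + 1) :
    ∑ A ∈ e.powersetCard k, ufun S v₀ A = tfun S e := by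
  by_cases hv : v₀ ∈ e
  · rw [Finset.sum_eq_single (e.erase v₀)]
    · rw [ufun, if_neg (Finset.notMem_erase _ _), Finset.insert_erase hv]
    · intro b hb hbne
      rw [Finset.mem_powersetCard] at hb
      rw [ufun, if_pos]
      by_contra hvb
      refine hbne (Finset.eq_of_subset_of_card_le ?_ ?_)
      · exact fun x hx => Finset.mem_erase.2 ⟨fun h => hvb (h ▸ hx), hb.1 hx⟩
      · rw [Finset.card_erase_of_mem hv, he, hb.2]; omega
    · intro habs
      exact absurd (Finset.mem_powersetCard.2 ⟨Finset.erase_subset _ _,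
        by rw [Finset.card_erase_of_mem hv, he]; omega⟩) habs
  · set W := insert v₀ e with hWdef
    have hW : W.card = k + 2 := by
      rw [hWdef, Finset.card_insert_of_notMem hv, he]
    have h0 := sum_tfun hS hW
    rw [← Finset.sum_filter_add_sum_filter_not (W.powersetCard (k+1)) (fun B => v₀ ∈ B)] at h0
    have hnot : (W.powersetCard (k+1)).filter (fun B => ¬ v₀ ∈ B) = {e} := by
      ext B
      simp only [Finset.mem_filter, Finset.mem_powersetCard, Finset.mem_singleton]
      constructor
      · rintro ⟨⟨hBW, hBc⟩, hvB⟩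
        refine Finset.eq_of_subset_of_card_le ?_ (by omega)
        intro x hx
        rcases Finset.mem_insert.1 (hBW hx) with h | h
        · exact absurd (h ▸ hx) hvB
        · exact h
      · rintro rfl
        exact ⟨⟨Finset.subset_insert _ _, he⟩, hv⟩
    have hbij : ∑ A ∈ e.powersetCard k, ufun S v₀ A
        = ∑ B ∈ (W.powersetCard (k+1)).filter (fun B => v₀ ∈ B), tfun S B := by
      refine Finset.sum_nbij' (fun A => insert v₀ A) (fun B => B.erase v₀) ?_ ?_ ?_ ?_ ?_
      · intro A hA
        rw [Finset.mem_powersetCard] at hA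
        have hvA : v₀ ∉ A := fun h => hv (hA.1 h)
        refine Finset.mem_filter.2 ⟨Finset.mem_powersetCard.2 ⟨?_, ?_⟩, Finset.mem_insert_self _ _⟩
        · exact Finset.insert_subset_insert _ hA.1
        · rw [Finset.card_insert_of_notMem hvA, hA.2]
      · intro B hB
        simp only [Finset.mem_filter, Finset.mem_powersetCard] at hB
        refine Finset.mem_powersetCard.2 ⟨?_, ?_⟩
        · intro x hx
          rcases Finset.mem_insert.1 (hB.1.1 (Finset.mem_of_mem_erase hx)) with h | h
          · exact absurd (h ▸ hx) (Finset.notMem_erase v₀ B)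
          · exact h
        · rw [Finset.card_erase_of_mem hB.2, hB.1.2]; omega
      · intro A hA
        rw [Finset.mem_powersetCard] at hA
        exact Finset.erase_insert (fun h => hv (hA.1 h))
      · intro B hB
        simp only [Finset.mem_filter] at hB
        exact Finset.insert_erase hB.2
      · intro A hA
        rw [Finset.mem_powersetCard] at hA
        have hvA : v₀ ∉ A := fun h => hv (hA.1 h)
        rw [ufun, if_neg hvA]
    rw [hnot, Finset.sum_singleton, ← hbij] at h0
    have h2 : (2 : ZMod 2) = 0 := by decide
    linear_combination h0 - h2 * tfun S e

end Cochain

/-- Any `k`-element subset of the vertex set of a hypergraph `H` induces an embedding of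
`Ak k` into `H`. -/
noncomputable def mkEmbAk (k : ℕ) (H : OrdHyp (k + 1)) (A₀ : Finset H.V) (hA : A₀.card = k) :
    Emb (Ak k) H :=
  ⟨fun i => (A₀.orderIsoOfFin hA i : H.V),
   fun a b hab => by exact_mod_cast (A₀.orderIsoOfFin hA).strictMono hab,
   fun e he => by
     have h1 : e.card ≤ k := by
       have := Finset.card_le_univ (s := e)
       exact this.trans (le_of_eq (Fintype.card_fin k))
     omega⟩

lemma mkEmbAk_image (k : ℕ) (H : OrdHyp (k + 1)) (A₀ : Finset H.V) (hA : A₀.card = k) :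
    Finset.univ.image (mkEmbAk k H A₀ hA).1 = A₀ := by
  ext x
  simp only [Finset.mem_image, Finset.mem_univ, true_and]
  constructor
  · rintro ⟨i, rfl⟩
    exact (A₀.orderIsoOfFin hA i).2
  · intro hx
    exact ⟨(A₀.orderIsoOfFin hA).symm ⟨x, hx⟩,
      congrArg Subtype.val ((A₀.orderIsoOfFin hA).apply_symm_apply ⟨x, hx⟩)⟩

/-- In the class `K(H_o^k)` of finite ordered `(k+1)`-uniform hypergraphs satisfying
condition (†), the structure with exactly `k` vertices and empty hyperedge set is not a
Ramsey object. -/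
theorem Ak_not_ramsey_object (k : ℕ) (hk : 3 ≤ k) :
    ∃ B ∈ {H : OrdHyp (k + 1) | Dagger k H.S},
      ∀ C ∈ {H : OrdHyp (k + 1) | Dagger k H.S},
        ∃ χ : Emb (Ak k) C → Fin 2, ∀ g : Emb B C,
          ∃ f f' : Emb (Ak k) B, χ (g.comp f) ≠ χ (g.comp f') := by
  classical
  refine ⟨Bhyp k, Bhyp_dagger k, ?_⟩
  intro C hC
  by_cases hne : Nonempty C.V
  swap
  · refine ⟨fun _ => 0, fun g => ?_⟩
    exact absurd ⟨g.1 (⟨0, by omega⟩ : Fin (k + 2))⟩ hne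
  obtain ⟨v₀⟩ := hne
  refine ⟨fun f => (ufun C.S v₀ (Finset.univ.image f.1) : ZMod 2), fun g => ?_⟩
  by_contra hcon
  push_neg at hcon
  -- base embedding and the constant value
  have hA₀ : ((Finset.univ : Finset (Fin k)).image
      (Fin.castLE (by omega : k ≤ k + 2))).card = k := by
    rw [Finset.card_image_of_injective _ (Fin.castLE_injective _), Finset.card_univ, Fintype.card_fin]
  set f₀ : Emb (Ak k) (Bhyp k) := mkEmbAk k (Bhyp k) _ hA₀ with hf₀
  set c : ZMod 2 := ufun C.S v₀ (Finset.univ.image (g.comp f₀).1) with hc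
  -- every k-subset of the image of g gets colour c
  have hconst : ∀ A₁ : Finset (Fin (k + 2)), A₁.card = k →
      ufun C.S v₀ (A₁.image g.1) = c := by
    intro A₁ hA₁
    have := hcon (mkEmbAk k (Bhyp k) A₁ hA₁) f₀
    have himg : Finset.univ.image (g.comp (mkEmbAk k (Bhyp k) A₁ hA₁)).1 = A₁.image g.1 := by
      show Finset.univ.image (g.1 ∘ (mkEmbAk k (Bhyp k) A₁ hA₁).1) = A₁.image g.1
      rw [← Finset.image_image]
      exact congrArg (Finset.image g.1) (mkEmbAk_image k (Bhyp k) A₁ hA₁)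
    rw [himg] at this
    exact this
  -- the two key (k+1)-subsets of Fin (k+2)
  set j0 : Fin k := ⟨0, by omega⟩ with hj0
  set e₁ : Finset (Fin (k + 2)) := Finset.univ.erase (Fin.castLE (by omega) j0) with he₁
  set e₂ : Finset (Fin (k + 2)) := Finset.univ.erase (Fin.last (k + 1)) with he₂
  have he₁S : e₁ ∈ SB k := ⟨j0, Set.mem_univ _, rfl⟩
  have he₂S : e₂ ∉ SB k := by
    rintro ⟨j, -, hj⟩
    have := erase_univ_inj hj.symm
    have := congrArg Fin.val this
    simp [Fin.last] at this
    omega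
  have hcard : ∀ i : Fin (k + 2), (Finset.univ.erase i).card = k + 1 := by
    intro i
    rw [Finset.card_erase_of_mem (Finset.mem_univ _), Finset.card_univ]
    simp
  -- transfer along g
  have hgraph := g.2.2
  have he₁C : e₁.image g.1 ∈ C.S := (hgraph e₁ (hcard _)).1 he₁S
  have he₂C : e₂.image g.1 ∉ C.S := fun h => he₂S ((hgraph e₂ (hcard _)).2 h)
  have hgi : Function.Injective g.1 := g.2.1.injective
  -- the two sums
  have hsum : ∀ e : Finset (Fin (k + 2)), e.card = k + 1 →
      ∑ A ∈ (e.image g.1).powersetCard k, ufun C.S v₀ A = tfun C.S (e.image g.1) := by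
    intro e he
    exact sum_ufun hC v₀ ((Finset.card_image_of_injective _ hgi).trans he)
  have hval : ∀ e : Finset (Fin (k + 2)), e.card = k + 1 →
      ∑ A ∈ (e.image g.1).powersetCard k, ufun C.S v₀ A = (k + 1) • c := by
    intro e he
    have hAc : ∀ A ∈ (e.image g.1).powersetCard k, ufun C.S v₀ A = c := by
      intro A hA
      rw [Finset.mem_powersetCard] at hA
      obtain ⟨A₁, hA₁sub, hA₁⟩ := Finset.subset_image_iff.1 hA.1
      have hA₁card : A₁.card = k := by
        have : A₁.card = A.card := by
          rw [← hA₁, Finset.card_image_of_injective _ hgi]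
        rw [this, hA.2]
      rw [← hA₁]
      exact hconst A₁ hA₁card
    rw [Finset.sum_congr rfl hAc, Finset.sum_const, Finset.card_powersetCard]
    have hcd : (e.image g.1).card = k + 1 := (Finset.card_image_of_injective _ hgi).trans he
    rw [hcd, Nat.choose_succ_self_right]
  have h1 : (k + 1) • c = 0 := by
    rw [← hval e₁ (hcard _), hsum e₁ (hcard _), tfun, if_pos he₁C]
  have h2 : (k + 1) • c = 1 := by
    rw [← hval e₂ (hcard _), hsum e₂ (hcard _), tfun, if_neg he₂C]
  rw [h1] at h2
  exact absurd h2 (by decide)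
end
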